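/- Define the bounded sequence y : ℕ → ℝ by y_k = 2 if there exists an integer n ≥ 1 with 2^{2n} < k ≤ 2^{2n+1}, and y_k = 1 otherwise. Then the Cesàro means Cy do not converge, yet B(y) = 3/2 for every Cesàro-invariant Banach limit B (i.e., every Banach limit B with B ∘ C = B). -/

import Mathlib

open scoped BigOperators

/-- Membership in `l_∞`: the sequence is bounded. -/
def Bdd (x : ℕ → ℝ) : Prop := ∃ M : ℝ, ∀ n : ℕ, |x n| ≤ M

/-- The right shift `S` on sequences: `(Sx)_0 = 0`, `(Sx)_{n+1} = x_n`. -/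
def Sfun (x : ℕ → ℝ) : ℕ → ℝ
  | 0 => 0
  | n + 1 => x n

/-- `B` is a Banach limit on `l_∞`: a positive, normalised, shift-invariant linear
functional. -/
def IsBanachLimit (B : (ℕ → ℝ) → ℝ) : Prop :=
  (∀ x y : ℕ → ℝ, Bdd x → Bdd y → B (x + y) = B x + B y) ∧
  (∀ (c : ℝ) (x : ℕ → ℝ), Bdd x → B (c • x) = c * B x) ∧
  (∀ x : ℕ → ℝ, Bdd x → 0 ≤ x → 0 ≤ B x) ∧
  B (fun _ => (1 : ℝ)) = 1 ∧
  (∀ x : ℕ → ℝ, Bdd x → B (Sfun x) = B x)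

/-- The Cesàro operator `C` on sequences: `(Cx)_n = (1/(n+1)) Σ_{k=0}^n x_k`. -/
noncomputable def Ces (x : ℕ → ℝ) : ℕ → ℝ := fun n =>
  (∑ k ∈ Finset.range (n + 1), x k) / ((n : ℝ) + 1)

open scoped Classical in
/-- The sequence `y` equal to `2` on the blocks `(2^{2n}, 2^{2n+1}]` (`n ≥ 1`) and
`1` elsewhere. -/
noncomputable def yseq2 : ℕ → ℝ := fun k =>
  if ∃ n : ℕ, 1 ≤ n ∧ 2 ^ (2 * n) < k ∧ k ≤ 2 ^ (2 * n + 1) then 2 else 1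

/-!
Non-convergence: `y` is `2` on the blocks `(4ⁿ, 2·4ⁿ]` and `1` on `(2·4ⁿ, 4ⁿ⁺¹]`, and a
sequence that equals `c` on arbitrarily long doubling blocks `(a, 2a]` can only have `c` as
Cesàro limit.

Banach limits: write `y = 3/2 + z`. Summation by parts gives `C z = P + P/(n+1) - C P` with
`P n = ∑_{k ≤ n} z_k/(k+1)`. A Cesàro-invariant `B` cancels `P` against `C P` and annihilates the
null sequence `P/(n+1)`, so `B z = 0` as soon as `P` is bounded. It is, because `z = ±1/2` on the
two halves of each period `(4ⁿ, 4ⁿ⁺¹]` and the period's contribution to `P` is `O(4⁻ⁿ)`.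
-/

open Filter Topology Finset

lemma bdd_const (c : ℝ) : Bdd (fun _ => c) := ⟨|c|, fun _ => le_rfl⟩

lemma Bdd.mono {x y : ℕ → ℝ} (hy : Bdd y) (h : ∀ n, |x n| ≤ |y n|) : Bdd x :=
  let ⟨M, hM⟩ := hy
  ⟨M, fun n => (h n).trans (hM n)⟩

lemma Bdd.add {x y : ℕ → ℝ} (hx : Bdd x) (hy : Bdd y) : Bdd (x + y) :=
  let ⟨M, hM⟩ := hx
  let ⟨N, hN⟩ := hy
  ⟨M + N, fun n => (abs_add_le _ _).trans (add_le_add (hM n) (hN n))⟩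

lemma Bdd.sub {x y : ℕ → ℝ} (hx : Bdd x) (hy : Bdd y) : Bdd (x - y) :=
  let ⟨M, hM⟩ := hx
  let ⟨N, hN⟩ := hy
  ⟨M + N, fun n => (abs_sub _ _).trans (add_le_add (hM n) (hN n))⟩

lemma Bdd.smul {x : ℕ → ℝ} (hx : Bdd x) (c : ℝ) : Bdd (c • x) :=
  let ⟨M, hM⟩ := hx
  ⟨|c| * M, fun n => by
    rw [Pi.smul_apply, smul_eq_mul, abs_mul]
    exact mul_le_mul_of_nonneg_left (hM n) (abs_nonneg c)⟩

lemma Bdd.comp_add {x : ℕ → ℝ} (hx : Bdd x) (m : ℕ) : Bdd (fun k => x (k + m)) :=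
  let ⟨M, hM⟩ := hx
  ⟨M, fun k => hM (k + m)⟩

lemma Bdd.sfun {x : ℕ → ℝ} (hx : Bdd x) : Bdd (Sfun x) :=
  let ⟨M, hM⟩ := hx
  ⟨M, fun
    | 0 => by simpa [Sfun] using (abs_nonneg _).trans (hM 0)
    | n + 1 => hM n⟩

lemma Bdd.ces {x : ℕ → ℝ} (hx : Bdd x) : Bdd (Ces x) := by
  obtain ⟨M, hM⟩ := hx
  refine ⟨M, fun N => ?_⟩
  have hN : (0 : ℝ) < N + 1 := by positivity
  rw [Ces, abs_div, abs_of_pos hN, div_le_iff₀ hN]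
  calc |∑ k ∈ range (N + 1), x k| ≤ ∑ k ∈ range (N + 1), |x k| := abs_sum_le_sum_abs _ _
    _ ≤ ∑ _k ∈ range (N + 1), M := sum_le_sum fun k _ => hM k
    _ = M * (N + 1) := by simp [mul_comm]

namespace IsBanachLimit

variable {B : (ℕ → ℝ) → ℝ}

lemma map_add (hB : IsBanachLimit B) {x y : ℕ → ℝ} (hx : Bdd x) (hy : Bdd y) :
    B (x + y) = B x + B y :=
  hB.1 x y hx hy

lemma map_sub (hB : IsBanachLimit B) {x y : ℕ → ℝ} (hx : Bdd x) (hy : Bdd y) :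
    B (x - y) = B x - B y := by
  rw [sub_eq_add_neg, ← neg_one_smul ℝ y, hB.map_add hx (hy.smul _), hB.2.1 _ _ hy]
  ring

lemma map_const (hB : IsBanachLimit B) (c : ℝ) : B (fun _ => c) = c := by
  have h := hB.2.1 c _ (bdd_const 1)
  rwa [hB.2.2.2.1, mul_one, show (c • fun _ : ℕ => (1 : ℝ)) = fun _ => c by
    funext; simp] at h

lemma mono (hB : IsBanachLimit B) {x y : ℕ → ℝ} (hx : Bdd x) (hy : Bdd y) (h : x ≤ y) :
    B x ≤ B y := by
  have := hB.2.2.1 (y - x) (hy.sub hx) (sub_nonneg.2 h)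
  rw [hB.map_sub hy hx] at this
  linarith

lemma abs_map_le (hB : IsBanachLimit B) {x : ℕ → ℝ} {c : ℝ} (hx : Bdd x)
    (h : ∀ k, |x k| ≤ c) : |B x| ≤ c := by
  have lower := hB.mono (bdd_const (-c)) hx fun k => (abs_le.1 (h k)).1
  have upper := hB.mono hx (bdd_const c) fun k => (abs_le.1 (h k)).2
  rw [hB.map_const] at lower upper
  exact abs_le.2 ⟨lower, upper⟩

/-- `x` is recovered from its tail as `S (tail x) + x₀ • (𝟙 - S 𝟙)`, and `B (𝟙 - S 𝟙) = 0`. -/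
lemma map_tail (hB : IsBanachLimit B) {x : ℕ → ℝ} (hx : Bdd x) :
    B (fun k => x (k + 1)) = B x := by
  set e : ℕ → ℝ := (fun _ => 1) - Sfun (fun _ => 1)
  have he : Bdd e := (bdd_const 1).sub (bdd_const 1).sfun
  have hBe : B e = 0 := by
    rw [hB.map_sub (bdd_const 1) (bdd_const 1).sfun, hB.2.2.2.2 _ (bdd_const 1), sub_self]
  have hsplit : x = Sfun (fun k => x (k + 1)) + x 0 • e := by
    funext k
    cases k <;> simp [e, Sfun]
  conv_rhs => rw [hsplit, hB.map_add (hx.comp_add 1).sfun (he.smul _),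
    hB.2.2.2.2 _ (hx.comp_add 1), hB.2.1 _ _ he, hBe, mul_zero, add_zero]

lemma map_comp_add (hB : IsBanachLimit B) {x : ℕ → ℝ} (hx : Bdd x) (m : ℕ) :
    B (fun k => x (k + m)) = B x := by
  induction m with
  | zero => rfl
  | succ m ih => simpa [add_assoc, add_comm 1 m] using (hB.map_tail (hx.comp_add m)).trans ih

lemma map_eq_zero_of_tendsto (hB : IsBanachLimit B) {x : ℕ → ℝ} (hx : Bdd x)
    (h : Tendsto x atTop (𝓝 0)) : B x = 0 := by
  refine abs_nonpos_iff.1 (le_of_forall_pos_le_add fun ε hε => ?_)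
  obtain ⟨m, hm⟩ := Metric.tendsto_atTop.1 h ε hε
  rw [← hB.map_comp_add hx m, zero_add]
  refine hB.abs_map_le (hx.comp_add m) fun k => ?_
  simpa [Real.dist_eq] using (hm (k + m) (Nat.le_add_left m k)).le

end IsBanachLimit

noncomputable def harmonicPartialSum (z : ℕ → ℝ) (M : ℕ) : ℝ :=
  ∑ k ∈ range M, z k / (k + 1)

lemma harmonicPartialSum_succ (z : ℕ → ℝ) (M : ℕ) :
    harmonicPartialSum z (M + 1) = harmonicPartialSum z M + z M / (M + 1) :=
  sum_range_succ _ _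

lemma sum_range_succ_eq_sub_sum_harmonicPartialSum (z : ℕ → ℝ) (N : ℕ) :
    ∑ k ∈ range (N + 1), z k
      = (N + 1) * harmonicPartialSum z (N + 1) - ∑ k ∈ range N, harmonicPartialSum z (k + 1) := by
  induction N with
  | zero => simp [harmonicPartialSum]
  | succ N ih =>
    rw [sum_range_succ, ih, sum_range_succ _ N, harmonicPartialSum_succ z (N + 1)]
    push_cast
    field_simp
    ring

lemma ces_eq_harmonicPartialSum (z : ℕ → ℝ) :
    Ces z = (fun N => harmonicPartialSum z (N + 1))
      + (fun N => harmonicPartialSum z (N + 1) / (N + 1))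
      - Ces (fun N => harmonicPartialSum z (N + 1)) := by
  funext N
  simp only [Pi.add_apply, Pi.sub_apply, Ces]
  rw [sum_range_succ_eq_sub_sum_harmonicPartialSum,
    sum_range_succ (fun k => harmonicPartialSum z (k + 1))]
  field_simp
  ring

lemma IsBanachLimit.map_eq_zero_of_bdd_harmonicPartialSum {B : (ℕ → ℝ) → ℝ}
    (hB : IsBanachLimit B) (hC : ∀ x : ℕ → ℝ, Bdd x → B (Ces x) = B x) {z : ℕ → ℝ}
    (hz : Bdd z) (hP : Bdd (fun N => harmonicPartialSum z (N + 1))) : B z = 0 := by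
  set P := fun N => harmonicPartialSum z (N + 1)
  set r := fun N : ℕ => P N / (N + 1)
  have hr_le : ∀ N, |r N| ≤ |P N| := fun N => by
    rw [abs_div, abs_of_pos (by positivity : (0 : ℝ) < N + 1)]
    exact div_le_self (abs_nonneg _) (by simp)
  have hr : Bdd r := hP.mono hr_le
  have hr0 : B r = 0 := by
    obtain ⟨M, hM⟩ := hP
    refine hB.map_eq_zero_of_tendsto hr (squeeze_zero_norm (a := fun N : ℕ => M * (1 / (N + 1)))
      (fun N => ?_) (by simpa using tendsto_one_div_add_atTop_nhds_zero_nat.const_mul M))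
    rw [Real.norm_eq_abs, abs_div, abs_of_pos (by positivity : (0 : ℝ) < N + 1), mul_one_div]
    gcongr
    exact hM N
  have h := hC z hz
  rw [ces_eq_harmonicPartialSum, hB.map_sub (hP.add hr) hP.ces, hB.map_add hP hr, hC P hP,
    hr0] at h
  linarith

/-- If `x = c` on the doubling blocks `(a n, 2 a n]` with `a n → ∞`, then `C x (2 a n)` is, up to
`o(1)`, the average of `C x (a n)` and `c`; so the only possible limit of `C x` is `c`. -/
lemma eq_of_tendsto_ces_of_eq_on_doubling_blocks {x : ℕ → ℝ} {L c : ℝ}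
    (hL : Tendsto (Ces x) atTop (𝓝 L)) {a : ℕ → ℕ} (ha : Tendsto a atTop atTop)
    (hx : ∀ n k, a n < k → k ≤ 2 * a n → x k = c) : L = c := by
  have hsum : ∀ n, (2 * a n + 1 : ℝ) * Ces x (2 * a n) = (a n + 1) * Ces x (a n) + a n * c := by
    intro n
    have hblock : ∑ i ∈ range (a n), x (a n + 1 + i) = ∑ _i ∈ range (a n), c :=
      sum_congr rfl fun i hi => hx n _ (by omega) (by simp at hi; omega)
    simp only [Ces]
    push_cast
    rw [mul_div_cancel₀ _ (by positivity), mul_div_cancel₀ _ (by positivity),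
      show 2 * a n + 1 = (a n + 1) + a n by ring, sum_range_add, hblock]
    simp
  set ε : ℕ → ℝ := fun n => (a n : ℝ)⁻¹
  have hε : Tendsto ε atTop (𝓝 0) :=
    tendsto_inv_atTop_zero.comp (tendsto_natCast_atTop_atTop.comp ha)
  have h1 : Tendsto (fun n => Ces x (a n)) atTop (𝓝 L) := hL.comp ha
  have h2 : Tendsto (fun n => Ces x (2 * a n)) atTop (𝓝 L) :=
    hL.comp (tendsto_atTop_mono (fun n => by omega) ha)
  have hlim : Tendsto (fun n => (2 + ε n) * Ces x (2 * a n) - (1 + ε n) * Ces x (a n)) atTop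
      (𝓝 ((2 + 0) * L - (1 + 0) * L)) :=
    ((tendsto_const_nhds.add hε).mul h2).sub ((tendsto_const_nhds.add hε).mul h1)
  have hconst : (fun n => (2 + ε n) * Ces x (2 * a n) - (1 + ε n) * Ces x (a n))
      =ᶠ[atTop] fun _ => c := by
    filter_upwards [ha.eventually_ge_atTop 1] with n hn
    have : (a n : ℝ) ≠ 0 := by positivity
    simp only [ε]
    field_simp
    linarith [hsum n]
  have := tendsto_nhds_unique (hlim.congr' hconst) tendsto_const_nhds
  linarith

@[simp]
lemma harmonicPartialSum_zero (z : ℕ → ℝ) : harmonicPartialSum z 0 = 0 :=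
  sum_range_zero _

lemma harmonicPartialSum_add (z : ℕ → ℝ) (m d : ℕ) :
    harmonicPartialSum z (m + d)
      = harmonicPartialSum z m + ∑ i ∈ range d, z (m + i) / ((m + i : ℕ) + 1) :=
  sum_range_add _ _ _

lemma abs_harmonicPartialSum_add_sub_le {z : ℕ → ℝ} {c : ℝ} (hz : ∀ k, |z k| ≤ c) (m d : ℕ) :
    |harmonicPartialSum z (m + d) - harmonicPartialSum z m| ≤ c * d / (m + 1) := by
  rw [harmonicPartialSum_add, add_sub_cancel_left]
  calc |∑ i ∈ range d, z (m + i) / ((m + i : ℕ) + 1)|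
      ≤ ∑ i ∈ range d, |z (m + i) / ((m + i : ℕ) + 1)| := abs_sum_le_sum_abs _ _
    _ ≤ ∑ _i ∈ range d, c / (m + 1) := sum_le_sum fun i _ => by
        rw [abs_div, abs_of_pos (by positivity : (0 : ℝ) < ((m + i : ℕ) : ℝ) + 1)]
        exact div_le_div₀ ((abs_nonneg _).trans (hz 0)) (hz _) (by positivity) (by simp)
    _ = c * d / (m + 1) := by simp only [sum_const, card_range, nsmul_eq_mul]; ring

lemma sum_range_two_mul (f : ℕ → ℝ) (n : ℕ) :
    ∑ j ∈ range (2 * n), f j = ∑ i ∈ range n, (f (2 * i) + f (2 * i + 1)) := by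
  induction n with
  | zero => simp
  | succ n ih =>
    rw [mul_add, mul_one, sum_range_succ, sum_range_succ, sum_range_succ, ih, add_assoc]

lemma abs_inv_add_one_sub_le {t : ℝ} (ht : 1 ≤ t) :
    |1 / (t + 1) - (1 / (2 * t) + 1 / (2 * t + 1))| ≤ 1 / t ^ 2 := by
  have key : 1 / (t + 1) - (1 / (2 * t) + 1 / (2 * t + 1))
      = -((3 * t + 1) / (2 * t * (t + 1) * (2 * t + 1))) := by
    field_simp
    ring
  rw [key, abs_neg, abs_of_nonneg (by positivity), div_le_div_iff₀ (by positivity) (by positivity)]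
  nlinarith

/-- On `(a, 4a]`, a sequence equal to `c` on the first half and `-c` on the second contributes
almost nothing to the weighted sums: pairing the terms `2k - 1, 2k` of the second half with the
term `k` of the first leaves `c (1/(k+1) - 1/(2k) - 1/(2k+1)) = O(1/k²)`. -/
lemma abs_harmonicPartialSum_sub_le_of_alternating {z : ℕ → ℝ} {a : ℕ} {c : ℝ} (ha : 1 ≤ a)
    (hpos : ∀ k, a < k → k ≤ 2 * a → z k = c) (hneg : ∀ k, 2 * a < k → k ≤ 4 * a → z k = -c) :
    |harmonicPartialSum z (4 * a + 1) - harmonicPartialSum z (a + 1)| ≤ |c| / a := by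
  have hup : harmonicPartialSum z (2 * a + 1)
      = harmonicPartialSum z (a + 1) + ∑ i ∈ range a, c / ((a + 1 + i : ℕ) + 1) := by
    rw [show 2 * a + 1 = a + 1 + a by ring, harmonicPartialSum_add]
    exact congrArg _ (sum_congr rfl fun i hi => by
      rw [hpos _ (by omega) (by simp at hi; omega)])
  have hdown : harmonicPartialSum z (4 * a + 1) = harmonicPartialSum z (2 * a + 1)
      + ∑ i ∈ range a, (-c / ((2 * a + 1 + 2 * i : ℕ) + 1)
        + -c / ((2 * a + 1 + (2 * i + 1) : ℕ) + 1)) := by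
    rw [show 4 * a + 1 = 2 * a + 1 + 2 * a by ring, harmonicPartialSum_add, sum_range_two_mul]
    exact congrArg _ (sum_congr rfl fun i hi => by
      rw [hneg _ (by omega) (by simp at hi; omega), hneg _ (by omega) (by simp at hi; omega)])
  have hterm : ∀ i ∈ range a, |c / ((a + 1 + i : ℕ) + 1) + (-c / ((2 * a + 1 + 2 * i : ℕ) + 1)
      + -c / ((2 * a + 1 + (2 * i + 1) : ℕ) + 1))| ≤ |c| * (1 / (a : ℝ) ^ 2) := fun i _ => by
    have ht : (1 : ℝ) ≤ a + 1 + i := by linarith [(Nat.cast_nonneg i : (0 : ℝ) ≤ i)]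
    calc _ = |c| * |1 / ((a + 1 + i : ℝ) + 1)
            - (1 / (2 * (a + 1 + i : ℝ)) + 1 / (2 * (a + 1 + i : ℝ) + 1))| := by
          rw [← abs_mul]; push_cast; ring_nf
      _ ≤ |c| * (1 / (a + 1 + i : ℝ) ^ 2) := by gcongr; exact abs_inv_add_one_sub_le ht
      _ ≤ |c| * (1 / (a : ℝ) ^ 2) := by gcongr; linarith [(Nat.cast_nonneg i : (0 : ℝ) ≤ i)]
  rw [hdown, hup, add_assoc, add_sub_cancel_left, ← sum_add_distrib]
  calc _ ≤ ∑ _i ∈ range a, |c| * (1 / (a : ℝ) ^ 2) :=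
        (abs_sum_le_sum_abs _ _).trans (sum_le_sum hterm)
    _ = |c| / a := by
      have : (a : ℝ) ≠ 0 := by positivity
      simp only [sum_const, card_range, nsmul_eq_mul]
      field_simp

/-- Cauchy along `4ⁿ + 1` by the geometric bound on each period; within a period the sums move
by at most `3c`. -/
lemma bdd_harmonicPartialSum_of_alternating {z : ℕ → ℝ} {c : ℝ} (hz : ∀ k, |z k| ≤ c)
    (hpos : ∀ n k, 1 ≤ n → 4 ^ n < k → k ≤ 2 * 4 ^ n → z k = c)
    (hneg : ∀ n k, 2 * 4 ^ n < k → k ≤ 4 ^ (n + 1) → z k = -c) :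
    Bdd (fun N => harmonicPartialSum z (N + 1)) := by
  have hc : 0 ≤ c := (abs_nonneg _).trans (hz 0)
  set u : ℕ → ℝ := fun n => harmonicPartialSum z (4 ^ (n + 1) + 1)
  have hstep : ∀ n, dist (u n) (u (n + 1)) ≤ c * (1 / 4) ^ n := fun n => by
    have h := abs_harmonicPartialSum_sub_le_of_alternating (Nat.one_le_pow _ _ (by norm_num))
      (hpos (n + 1) · le_add_self)
      (fun k h1 h2 => hneg (n + 1) k h1 (by rwa [pow_succ _ (n + 1), mul_comm]))
    rw [← pow_succ', abs_of_nonneg hc] at h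
    rw [dist_comm, Real.dist_eq, one_div_pow, mul_one_div]
    refine h.trans (div_le_div_of_nonneg_left hc (by positivity) ?_)
    push_cast
    exact pow_le_pow_right₀ (by norm_num) (by omega)
  obtain ⟨R, hR0, hR⟩ := cauchySeq_bdd (cauchySeq_of_le_geometric (1 / 4) c (by norm_num) hstep)
  refine ⟨|u 0| + R + 5 * c, fun N => ?_⟩
  rcases lt_or_ge N 4 with hN | hN
  · have h := abs_harmonicPartialSum_add_sub_le hz 0 (N + 1)
    rw [zero_add, harmonicPartialSum_zero, sub_zero] at h
    refine h.trans ?_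
    have : (N : ℝ) + 1 ≤ 5 := by exact_mod_cast (show N + 1 ≤ 5 by omega)
    push_cast
    rw [zero_add, div_one]
    nlinarith [abs_nonneg (u 0)]
  · obtain ⟨m, hm⟩ := Nat.exists_eq_add_one.2 (Nat.log_pos (b := 4) (by norm_num) hN)
    have hlo : 4 ^ (m + 1) ≤ N := hm ▸ Nat.pow_log_le_self 4 (by omega)
    have hhi : N < 4 ^ (m + 1 + 1) := hm ▸ Nat.lt_pow_succ_log_self (by norm_num) N
    obtain ⟨d, rfl⟩ : ∃ d, N = 4 ^ (m + 1) + d := ⟨N - 4 ^ (m + 1), by omega⟩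
    have hd : (d : ℝ) ≤ 3 * 4 ^ (m + 1) := by
      rw [pow_succ 4 (m + 1)] at hhi
      exact_mod_cast (show d ≤ 3 * 4 ^ (m + 1) by omega)
    have hjump := abs_harmonicPartialSum_add_sub_le hz (4 ^ (m + 1) + 1) d
    have hum : |u m| ≤ |u 0| + R := by
      have := hR m 0
      rw [Real.dist_eq] at this
      linarith [abs_sub_abs_le_abs_sub (u m) (u 0)]
    have hjump' : c * d / ((4 ^ (m + 1) + 1 : ℕ) + 1) ≤ 3 * c := by
      rw [div_le_iff₀ (by positivity)]
      push_cast
      nlinarith [mul_le_mul_of_nonneg_left hd hc]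
    show |harmonicPartialSum z (4 ^ (m + 1) + d + 1)| ≤ _
    rw [show 4 ^ (m + 1) + d + 1 = 4 ^ (m + 1) + 1 + d by ring]
    linarith [abs_sub_abs_le_abs_sub (harmonicPartialSum z (4 ^ (m + 1) + 1 + d)) (u m)]

lemma yseq2_eq_two {n k : ℕ} (hn : 1 ≤ n) (h1 : 4 ^ n < k) (h2 : k ≤ 2 * 4 ^ n) :
    yseq2 k = 2 := by
  rw [yseq2, if_pos ⟨n, hn, by rwa [pow_mul], by rwa [pow_succ, pow_mul, mul_comm]⟩]

lemma yseq2_eq_one {n k : ℕ} (h1 : 2 * 4 ^ n < k) (h2 : k ≤ 4 ^ (n + 1)) : yseq2 k = 1 := by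
  rw [yseq2, if_neg]
  rintro ⟨m, -, hm1, hm2⟩
  rw [pow_mul] at hm1
  rw [pow_succ, pow_mul] at hm2
  norm_num at hm1 hm2
  rcases le_or_gt m n with h | h
  · have := Nat.pow_le_pow_right (by norm_num : 4 > 0) h
    omega
  · have := Nat.pow_le_pow_right (by norm_num : 4 > 0) h
    omega

lemma abs_yseq2_sub_le (k : ℕ) : |yseq2 k - 3 / 2| ≤ 1 / 2 := by
  rw [yseq2]
  split_ifs <;> norm_num [abs_le]

/-- The Cesàro means of `y` do not converge, yet `B(y) = 3/2` for every
Cesàro-invariant Banach limit `B`. -/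
theorem stmt_17 :
    (¬ ∃ a : ℝ, Filter.Tendsto (Ces yseq2) Filter.atTop (nhds a)) ∧
    (∀ B : (ℕ → ℝ) → ℝ, IsBanachLimit B →
      (∀ x : ℕ → ℝ, Bdd x → B (Ces x) = B x) → B yseq2 = 3 / 2) := by
  have hpow : Tendsto (fun n : ℕ => 4 ^ n) atTop atTop :=
    tendsto_pow_atTop_atTop_of_one_lt (by norm_num)
  refine ⟨fun ⟨L, hL⟩ => ?_, fun B hB hC => ?_⟩
  · have h2 : L = 2 := eq_of_tendsto_ces_of_eq_on_doubling_blocks hL (a := fun n => 4 ^ (n + 1))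
      (hpow.comp (tendsto_add_atTop_nat 1)) fun n _ h1 h2 => yseq2_eq_two (by omega) h1 h2
    have h1 : L = 1 := eq_of_tendsto_ces_of_eq_on_doubling_blocks hL
      (tendsto_atTop_mono (fun n => Nat.le_mul_of_pos_left _ two_pos) hpow)
      fun n _ h1 h2 => yseq2_eq_one h1 (by rw [pow_succ]; omega)
    norm_num [h1] at h2
  · set z : ℕ → ℝ := fun k => yseq2 k - 3 / 2
    have hz : Bdd z := ⟨1 / 2, abs_yseq2_sub_le⟩
    have hBz : B z = 0 := hB.map_eq_zero_of_bdd_harmonicPartialSum hC hz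
      (bdd_harmonicPartialSum_of_alternating abs_yseq2_sub_le
        (fun _ _ hn h1 h2 => by norm_num [z, yseq2_eq_two hn h1 h2])
        (fun _ _ h1 h2 => by norm_num [z, yseq2_eq_one h1 h2]))
    have hy : yseq2 = z + fun _ => 3 / 2 := by
      funext
      simp [z]
    rw [hy, hB.map_add hz (bdd_const _), hBz, hB.map_const, zero_add]
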